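/- arXiv:1910.12934 — 2 statements merged into one kernel-verified Lean document; each statement's English description precedes it below -/
import Mathlib

section
/- For every W ∈ Matrix (Fin n) (Fin n) ℝ, the tropical transfer matrix T(W) of the canonical totally connected planar network has all entries real and is tropical totally nonnegative, i.e., T(W) ∈ TNtrop(ℝ). -/
open Finset

/-- Truncated predecessor in `Fin n` (1-indexed entry `i-1`). -/
def fpred {n : ℕ} (j : Fin n) : Fin n :=
  ⟨j.val - 1, Nat.lt_of_le_of_lt (Nat.sub_le _ _) j.isLt⟩

/-- `ψ(W)_{i,j}` is the tropical weight of the uppermost path from source `i`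
to target `j` in the canonical planar network `G_n`. -/
def psi (n : ℕ) (W : Matrix (Fin n) (Fin n) ℝ) : Matrix (Fin n) (Fin n) ℝ :=
  fun i j => if i ≤ j then ∑ t ∈ Finset.Icc i j, W i t else ∑ t ∈ Finset.Icc j i, W t j

/-- The map `φ`, inverse of `ψ`. -/
def phi (n : ℕ) (A : Matrix (Fin n) (Fin n) ℝ) : Matrix (Fin n) (Fin n) ℝ :=
  fun i j =>
    if i = j then A i j
    else if i < j then A i j - A i (fpred j)
    else A i j - A (fpred i) j

/-- Weak trapeze inequalities. -/
def WeakTrapeze (n : ℕ) (W : Matrix (Fin n) (Fin n) ℝ) : Prop :=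
  ∀ i : Fin n, 0 < i.val →
    W i (fpred i) + W (fpred i) (fpred i) + W (fpred i) i ≤ W i i

/-- Strict trapeze inequalities. -/
def StrictTrapeze (n : ℕ) (W : Matrix (Fin n) (Fin n) ℝ) : Prop :=
  ∀ i : Fin n, 0 < i.val →
    W i (fpred i) + W (fpred i) (fpred i) + W (fpred i) i < W i i

/-- Weak parallelogram inequalities. -/
def WeakPara (n : ℕ) (W : Matrix (Fin n) (Fin n) ℝ) : Prop :=
  ∀ i j : Fin n, ∀ _h : j.val + 2 ≤ i.val,
    W i j ≤ W i ⟨j.val + 1, by have := i.isLt; omega⟩ ∧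
    W j i ≤ W ⟨j.val + 1, by have := i.isLt; omega⟩ i

/-- Strict parallelogram inequalities. -/
def StrictPara (n : ℕ) (W : Matrix (Fin n) (Fin n) ℝ) : Prop :=
  ∀ i j : Fin n, ∀ _h : j.val + 2 ≤ i.val,
    W i j < W i ⟨j.val + 1, by have := i.isLt; omega⟩ ∧
    W j i < W ⟨j.val + 1, by have := i.isLt; omega⟩ i

/-- Maximum, over the permutations of sign `ε`, of the tropical weight of the
permutation in the `k × k` matrix `B` (computed in `WithBot ℝ`, the maximum over
the empty set being `⊥ = -∞`). -/
def tropPermSup (k : ℕ) (ε : ℤˣ) (B : Matrix (Fin k) (Fin k) (WithBot ℝ)) : WithBot ℝ :=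
  (Finset.univ.filter fun σ : Equiv.Perm (Fin k) => Equiv.Perm.sign σ = ε).sup
    fun σ => ∑ i, B i (σ i)

/-- Tropical total nonnegativity of a matrix over `ℝ ∪ {-∞}`. -/
def IsTropTN (n : ℕ) (A : Matrix (Fin n) (Fin n) (WithBot ℝ)) : Prop :=
  ∀ (k : ℕ) (r c : Fin k → Fin n), StrictMono r → StrictMono c →
    tropPermSup k (-1) (A.submatrix r c) ≤ tropPermSup k 1 (A.submatrix r c)

/-- Tropical total positivity of a real matrix. -/
def IsTropTP (n : ℕ) (A : Matrix (Fin n) (Fin n) ℝ) : Prop :=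
  ∀ (k : ℕ), 2 ≤ k → ∀ (r c : Fin k → Fin n), StrictMono r → StrictMono c →
    tropPermSup k (-1) ((A.map ((↑) : ℝ → WithBot ℝ)).submatrix r c) <
      tropPermSup k 1 ((A.map ((↑) : ℝ → WithBot ℝ)).submatrix r c)

/-- Max-plus matrix product. -/
def tropMul {l m p : ℕ} (A : Matrix (Fin l) (Fin m) (WithBot ℝ))
    (B : Matrix (Fin m) (Fin p) (WithBot ℝ)) : Matrix (Fin l) (Fin p) (WithBot ℝ) :=
  fun i j => Finset.univ.sup fun k => A i k + B k j

/-- Tropical identity matrix. -/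
def tropId (n : ℕ) : Matrix (Fin n) (Fin n) (WithBot ℝ) :=
  fun i j => if i = j then 0 else ⊥

/-- Tropical elementary Jacobi matrix `x_i(s)` (0-indexed: `s` in position `(i, i+1)`). -/
def xUp (n : ℕ) (i : ℕ) (s : ℝ) : Matrix (Fin n) (Fin n) (WithBot ℝ) :=
  fun a b => if a = b then 0 else if a.val = i ∧ b.val = i + 1 then (s : WithBot ℝ) else ⊥

/-- Tropical elementary Jacobi matrix `x̄_i(s)` (0-indexed: `s` in position `(i+1, i)`). -/
def xLow (n : ℕ) (i : ℕ) (s : ℝ) : Matrix (Fin n) (Fin n) (WithBot ℝ) :=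
  fun a b => if a = b then 0 else if a.val = i + 1 ∧ b.val = i then (s : WithBot ℝ) else ⊥

/-- Tropical elementary Jacobi matrix `x∘_i(s)` (0-indexed diagonal matrix,
`s` in position `(i, i)`). -/
def xDiag (n : ℕ) (i : ℕ) (s : ℝ) : Matrix (Fin n) (Fin n) (WithBot ℝ) :=
  fun a b => if a = b then (if a.val = i then (s : WithBot ℝ) else 0) else ⊥

/-- Entry of `W` looked up with natural-number (0-based) indices. -/
def wnat (n : ℕ) (W : Matrix (Fin n) (Fin n) ℝ) (a b : ℕ) : ℝ :=
  if h : a < n ∧ b < n then W ⟨a, h.1⟩ ⟨b, h.2⟩ else 0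

/-- The left part `L(W)` of the canonical planar network:
`L(W) = ⊙_{k=1}^{n−1} ⊙_{t=1}^{k} x̄_{n−k+t−1}(W_{n−k+t, t})` (1-indexed). -/
def Lmat (n : ℕ) (W : Matrix (Fin n) (Fin n) ℝ) : Matrix (Fin n) (Fin n) (WithBot ℝ) :=
  ((List.range (n - 1)).flatMap fun k => (List.range (k + 1)).map fun t =>
      xLow n (n - k + t - 2) (wnat n W (n - k + t - 1) t)).foldl tropMul (tropId n)

/-- The diagonal part `D(W) = x∘_1(W_{1,1}) ⊙ ⋯ ⊙ x∘_n(W_{n,n})` (1-indexed). -/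
def Dmat (n : ℕ) (W : Matrix (Fin n) (Fin n) ℝ) : Matrix (Fin n) (Fin n) (WithBot ℝ) :=
  ((List.range n).map fun i => xDiag n i (wnat n W i i)).foldl tropMul (tropId n)

/-- The tropical transfer matrix of the canonical totally connected planar
network `G_n` with weight matrix `W`: `T(W) = L(W) ⊙ D(W) ⊙ (L(Wᵀ))ᵀ`. -/
def Tmat (n : ℕ) (W : Matrix (Fin n) (Fin n) ℝ) : Matrix (Fin n) (Fin n) (WithBot ℝ) :=
  tropMul (tropMul (Lmat n W) (Dmat n W)) (Matrix.transpose (Lmat n W.transpose))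

/-! Max-plus products and transposes of tropical totally nonnegative matrices are again
tropical totally nonnegative, and the elementary Jacobi matrices are lower bidiagonal, hence
tropical totally nonnegative; so `T(W)` is. Its entries are finite because `L(W)` is finite on
and below the diagonal and `D(W)` on the diagonal, so the path through `m = min i j` gives
`T(W)_{ij} ≥ L(W)_{im} + D(W)_{mm} + L(Wᵀ)_{jm} > -∞`. -/

open Equiv
open scoped Matrix

section TropicalTotalNonnegativity

variable {n k : ℕ}

lemma le_tropPermSup {ε : ℤˣ} (B : Matrix (Fin k) (Fin k) (WithBot ℝ)) (σ : Perm (Fin k))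
    (hσ : Perm.sign σ = ε) : ∑ i, B i (σ i) ≤ tropPermSup k ε B :=
  le_sup (f := fun σ : Perm (Fin k) => ∑ i, B i (σ i)) (mem_filter.mpr ⟨mem_univ _, hσ⟩)

lemma exists_sign_eq_one_sum_le {B : Matrix (Fin k) (Fin k) (WithBot ℝ)}
    (hB : tropPermSup k (-1) B ≤ tropPermSup k 1 B) (σ : Perm (Fin k)) :
    ∃ τ : Perm (Fin k), Perm.sign τ = 1 ∧ ∑ i, B i (σ i) ≤ ∑ i, B i (τ i) := by
  rcases Int.units_eq_one_or (Perm.sign σ) with hσ | hσ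
  · exact ⟨σ, hσ, le_rfl⟩
  obtain ⟨τ, hτ, hsup⟩ := exists_mem_eq_sup (univ.filter fun τ : Perm (Fin k) => Perm.sign τ = 1)
    ⟨1, mem_filter.mpr ⟨mem_univ _, Perm.sign_one⟩⟩ fun τ => ∑ i, B i (τ i)
  exact ⟨τ, (mem_filter.mp hτ).2, (le_tropPermSup B σ hσ).trans (hB.trans hsup.le)⟩

lemma tropPermSup_transpose_le (ε : ℤˣ) (B : Matrix (Fin k) (Fin k) (WithBot ℝ)) :
    tropPermSup k ε Bᵀ ≤ tropPermSup k ε B := by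
  refine Finset.sup_le fun σ hσ => ?_
  have hsum : ∑ i, Bᵀ i (σ i) = ∑ i, B i (σ⁻¹ i) := by
    rw [← Equiv.sum_comp σ fun i => B i (σ⁻¹ i)]
    simp
  rw [hsum]
  exact le_tropPermSup B σ⁻¹ (by rw [Perm.sign_inv, (mem_filter.mp hσ).2])

lemma tropPermSup_transpose (ε : ℤˣ) (B : Matrix (Fin k) (Fin k) (WithBot ℝ)) :
    tropPermSup k ε Bᵀ = tropPermSup k ε B :=
  le_antisymm (tropPermSup_transpose_le ε B) (by simpa using tropPermSup_transpose_le ε Bᵀ)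

lemma IsTropTN.transpose {A : Matrix (Fin n) (Fin n) (WithBot ℝ)} (hA : IsTropTN n A) :
    IsTropTN n Aᵀ := by
  intro k r c hr hc
  rw [← Matrix.transpose_submatrix, tropPermSup_transpose, tropPermSup_transpose]
  exact hA k c r hc hr

lemma le_tropMul {l m p : ℕ} (A : Matrix (Fin l) (Fin m) (WithBot ℝ))
    (B : Matrix (Fin m) (Fin p) (WithBot ℝ)) (i : Fin l) (t : Fin m) (j : Fin p) :
    A i t + B t j ≤ tropMul A B i j :=
  le_sup (f := fun t => A i t + B t j) (mem_univ t)

lemma sum_add_sum_le_sum_tropMul (A B : Matrix (Fin n) (Fin n) (WithBot ℝ))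
    (r g c : Fin k → Fin n) (α β : Perm (Fin k)) :
    ∑ i, A (r i) (g (α i)) + ∑ j, B (g j) (c (β j)) ≤
      ∑ i, tropMul A B (r i) (c ((β * α) i)) := by
  rw [← Equiv.sum_comp α fun j => B (g j) (c (β j)), ← sum_add_distrib]
  exact sum_le_sum fun i _ => le_tropMul A B _ _ _

/-- Sorting an injective witness `f` gives the strictly monotone `f ∘ π`; on the submatrices
through `f ∘ π` the TN inequalities of `A` and `B` trade the two induced permutations for even
ones of no smaller weight, and these compose to an even permutation of the product. -/
lemma sum_le_tropPermSup_tropMul_of_injective {A B : Matrix (Fin n) (Fin n) (WithBot ℝ)}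
    (hA : IsTropTN n A) (hB : IsTropTN n B) {r c f : Fin k → Fin n} (hr : StrictMono r)
    (hc : StrictMono c) (hf : Function.Injective f) (σ : Perm (Fin k)) :
    ∑ i, (A (r i) (f i) + B (f i) (c (σ i))) ≤
      tropPermSup k 1 ((tropMul A B).submatrix r c) := by
  set π := Tuple.sort f
  have hg : StrictMono (f ∘ π) :=
    (Tuple.monotone_sort f).strictMono_of_injective (hf.comp π.injective)
  obtain ⟨α, hα, hαle⟩ := exists_sign_eq_one_sum_le (hA k r (f ∘ π) hr hg) π⁻¹
  obtain ⟨β, hβ, hβle⟩ := exists_sign_eq_one_sum_le (hB k (f ∘ π) c hg hc) (σ * π)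
  calc ∑ i, (A (r i) (f i) + B (f i) (c (σ i)))
      = ∑ i, A (r i) (f (π (π⁻¹ i))) + ∑ j, B (f (π j)) (c ((σ * π) j)) := by
        rw [sum_add_distrib, ← Equiv.sum_comp π fun i => B (f i) (c (σ i))]
        simp
    _ ≤ ∑ i, A (r i) ((f ∘ π) (α i)) + ∑ j, B ((f ∘ π) j) (c (β j)) := add_le_add hαle hβle
    _ ≤ ∑ i, tropMul A B (r i) (c ((β * α) i)) := sum_add_sum_le_sum_tropMul A B r _ c α β
    _ ≤ _ := le_tropPermSup ((tropMul A B).submatrix r c) (β * α) (by simp [hα, hβ])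

/-- If two rows pass through the same index, swapping their columns changes the parity
but not the weight. -/
lemma sum_le_tropPermSup_tropMul_of_not_injective (A B : Matrix (Fin n) (Fin n) (WithBot ℝ))
    (r c : Fin k → Fin n) {f : Fin k → Fin n} (hf : ¬ Function.Injective f)
    {σ : Perm (Fin k)} (hσ : Perm.sign σ = -1) :
    ∑ i, (A (r i) (f i) + B (f i) (c (σ i))) ≤
      tropPermSup k 1 ((tropMul A B).submatrix r c) := by
  obtain ⟨i₁, i₂, hfi, hne⟩ : ∃ i₁ i₂, f i₁ = f i₂ ∧ i₁ ≠ i₂ := by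
    simpa [Function.Injective] using hf
  set τ := σ * swap i₁ i₂
  have hfτ : ∀ i, f (swap i₁ i₂ i) = f i := fun i => by
    rw [swap_apply_def]; split_ifs <;> simp_all
  calc ∑ i, (A (r i) (f i) + B (f i) (c (σ i)))
      = ∑ i, (A (r i) (f i) + B (f i) (c (τ i))) := by
        rw [sum_add_distrib, sum_add_distrib,
          ← Equiv.sum_comp (swap i₁ i₂) fun i => B (f i) (c (τ i))]
        simp [τ, hfτ]
    _ ≤ ∑ i, tropMul A B (r i) (c (τ i)) := sum_le_sum fun i _ => le_tropMul A B _ _ _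
    _ ≤ _ := le_tropPermSup ((tropMul A B).submatrix r c) τ
      (by simp [τ, hσ, Perm.sign_swap hne])

theorem isTropTN_tropMul {A B : Matrix (Fin n) (Fin n) (WithBot ℝ)} (hA : IsTropTN n A)
    (hB : IsTropTN n B) : IsTropTN n (tropMul A B) := by
  intro k r c hr hc
  refine Finset.sup_le fun σ hσ => ?_
  obtain ⟨f, hf⟩ : ∃ f : Fin k → Fin n,
      ∀ i, tropMul A B (r i) (c (σ i)) = A (r i) (f i) + B (f i) (c (σ i)) := by
    choose f _ hf using fun i => exists_mem_eq_sup univ ⟨r i, mem_univ _⟩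
      fun t => A (r i) t + B t (c (σ i))
    exact ⟨f, hf⟩
  rw [show ∑ i, (tropMul A B).submatrix r c i (σ i) = ∑ i, (A (r i) (f i) + B (f i) (c (σ i)))
    from sum_congr rfl fun i _ => hf i]
  by_cases hinj : Function.Injective f
  · exact sum_le_tropPermSup_tropMul_of_injective hA hB hr hc hinj σ
  · exact sum_le_tropPermSup_tropMul_of_not_injective A B r c hinj (mem_filter.mp hσ).2

theorem IsTropTN.foldl_tropMul {l : List (Matrix (Fin n) (Fin n) (WithBot ℝ))}
    (hl : ∀ M ∈ l, IsTropTN n M) {P : Matrix (Fin n) (Fin n) (WithBot ℝ)} (hP : IsTropTN n P) :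
    IsTropTN n (l.foldl tropMul P) := by
  induction l generalizing P with
  | nil => exact hP
  | cons M l ih =>
    exact ih (fun N hN => hl N (List.mem_cons_of_mem _ hN))
      (isTropTN_tropMul hP (hl M List.mem_cons_self))

/-- Only the identity permutation can have finite weight in a submatrix of a lower
bidiagonal matrix: an inversion `i < j`, `σ j < σ i` would force
`c (σ j) + 1 ≤ c (σ i) ≤ r i < r j ≤ c (σ j) + 1`. -/
lemma isTropTN_of_lower_bidiagonal {A : Matrix (Fin n) (Fin n) (WithBot ℝ)}
    (hA : ∀ a b, A a b ≠ ⊥ → (b : ℕ) ≤ a ∧ (a : ℕ) ≤ b + 1) : IsTropTN n A := by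
  intro k r c hr hc
  refine (Finset.sup_le fun σ hσ => ?_).trans bot_le
  by_contra hne
  have hband : ∀ i, (c (σ i) : ℕ) ≤ r i ∧ (r i : ℕ) ≤ c (σ i) + 1 := fun i =>
    hA _ _ fun h => hne (le_of_eq (WithBot.sum_eq_bot_iff.mpr ⟨i, mem_univ i, h⟩))
  have hmono : StrictMono σ := fun i j hij => by
    by_contra hle
    have hlt : σ j < σ i := lt_of_le_of_ne (not_lt.mp hle) (σ.injective.ne hij.ne')
    have := Fin.lt_def.mp (hr hij)
    have := Fin.lt_def.mp (hc hlt)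
    have := hband i
    have := hband j
    omega
  have hσ1 : σ = 1 := Equiv.ext (congrFun hmono.eq_id)
  have := (mem_filter.mp hσ).2
  simp [hσ1] at this

lemma isTropTN_xLow (q : ℕ) (s : ℝ) : IsTropTN n (xLow n q s) :=
  isTropTN_of_lower_bidiagonal fun a b h => by
    simp only [xLow] at h
    split_ifs at h with h₁ h₂
    · simp [h₁]
    · omega
    · exact absurd rfl h

lemma isTropTN_xDiag (q : ℕ) (s : ℝ) : IsTropTN n (xDiag n q s) :=
  isTropTN_of_lower_bidiagonal fun a b h => by
    by_cases h₁ : a = b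
    · simp [h₁]
    · simp [xDiag, h₁] at h

lemma isTropTN_tropId : IsTropTN n (tropId n) :=
  isTropTN_of_lower_bidiagonal fun a b h => by
    by_cases h₁ : a = b
    · simp [h₁]
    · simp [tropId, h₁] at h

lemma isTropTN_Lmat (W : Matrix (Fin n) (Fin n) ℝ) : IsTropTN n (Lmat n W) := by
  refine IsTropTN.foldl_tropMul (fun M hM => ?_) isTropTN_tropId
  simp only [List.mem_flatMap, List.mem_map, List.mem_range] at hM
  obtain ⟨_, _, _, _, rfl⟩ := hM
  exact isTropTN_xLow _ _

lemma isTropTN_Dmat (W : Matrix (Fin n) (Fin n) ℝ) : IsTropTN n (Dmat n W) := by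
  refine IsTropTN.foldl_tropMul (fun M hM => ?_) isTropTN_tropId
  simp only [List.mem_map, List.mem_range] at hM
  obtain ⟨_, _, rfl⟩ := hM
  exact isTropTN_xDiag _ _

end TropicalTotalNonnegativity

section FiniteEntries

variable {n : ℕ}

lemma tropMul_ne_bot {l m p : ℕ} {A : Matrix (Fin l) (Fin m) (WithBot ℝ)}
    {B : Matrix (Fin m) (Fin p) (WithBot ℝ)} {i : Fin l} {t : Fin m} {j : Fin p}
    (hA : A i t ≠ ⊥) (hB : B t j ≠ ⊥) : tropMul A B i j ≠ ⊥ :=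
  ne_bot_of_le_ne_bot (WithBot.add_ne_bot.mpr ⟨hA, hB⟩) (le_tropMul A B i t j)

variable {l : List (Matrix (Fin n) (Fin n) (WithBot ℝ))} {P : Matrix (Fin n) (Fin n) (WithBot ℝ)}

lemma foldl_tropMul_ne_bot (hl : ∀ M ∈ l, ∀ a, M a a ≠ ⊥) {i j : Fin n} (hP : P i j ≠ ⊥) :
    l.foldl tropMul P i j ≠ ⊥ := by
  induction l generalizing P with
  | nil => exact hP
  | cons M l ih =>
    exact ih (fun N hN => hl N (List.mem_cons_of_mem _ hN))
      (tropMul_ne_bot hP (hl M List.mem_cons_self j))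

lemma foldl_tropMul_ne_bot_of_mem (hl : ∀ M ∈ l, ∀ a, M a a ≠ ⊥) {M} (hM : M ∈ l)
    {i t j : Fin n} (hP : P i t ≠ ⊥) (hMtj : M t j ≠ ⊥) : l.foldl tropMul P i j ≠ ⊥ := by
  induction l generalizing P with
  | nil => simp at hM
  | cons N l ih =>
    have hl' : ∀ M ∈ l, ∀ a, M a a ≠ ⊥ := fun N hN => hl N (List.mem_cons_of_mem _ hN)
    rcases List.mem_cons.mp hM with rfl | hM
    · exact foldl_tropMul_ne_bot hl' (tropMul_ne_bot hP hMtj)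
    · exact ih hl' hM (tropMul_ne_bot hP (hl N (by simp) t))

lemma xLow_ne_bot {q : ℕ} {s : ℝ} {a b : Fin n} (h : a = b ∨ (a : ℕ) = q + 1 ∧ (b : ℕ) = q) :
    xLow n q s a b ≠ ⊥ := by
  unfold xLow
  split_ifs <;> simp_all

lemma xDiag_apply_self_ne_bot (q : ℕ) (s : ℝ) (a : Fin n) : xDiag n q s a a ≠ ⊥ := by
  unfold xDiag
  split_ifs <;> simp_all

/-- The `k`-th block `x̄_{n-k-1}(⋅) ⊙ ⋯ ⊙ x̄_{n-1}(⋅)` (1-indexed) of the product `L(W)`. -/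
def lowerBlock (W : Matrix (Fin n) (Fin n) ℝ) (k : ℕ) :
    List (Matrix (Fin n) (Fin n) (WithBot ℝ)) :=
  (List.range (k + 1)).map fun t => xLow n (n - k + t - 2) (wnat n W (n - k + t - 1) t)

lemma lowerBlock_apply_self_ne_bot (W : Matrix (Fin n) (Fin n) ℝ) (k : ℕ) :
    ∀ M ∈ lowerBlock W k, ∀ a, M a a ≠ ⊥ := by
  simp only [lowerBlock, List.mem_map]
  rintro _ ⟨t, -, rfl⟩ a
  exact xLow_ne_bot (Or.inl rfl)

lemma foldl_lowerBlock_ne_bot (W : Matrix (Fin n) (Fin n) ℝ) (K : ℕ) {i j : Fin n}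
    (hji : j ≤ i) (h : i = j ∨ n ≤ j + K + 1) :
    ((List.range K).flatMap (lowerBlock W)).foldl tropMul (tropId n) i j ≠ ⊥ := by
  induction K generalizing j with
  | zero =>
    obtain rfl : i = j := h.elim id fun h => Fin.ext (by omega)
    simp [tropId]
  | succ K ih =>
    rw [List.range_succ, List.flatMap_append, List.foldl_append, List.flatMap_singleton]
    by_cases hK : i = j ∨ n ≤ j + K + 1
    · exact foldl_tropMul_ne_bot (lowerBlock_apply_self_ne_bot W K) (ih hji hK)
    · have hjK : (j : ℕ) + K + 2 = n := by omega
      have hj : (j : ℕ) < i := Fin.lt_def.mp (lt_of_le_of_ne hji (Ne.symm (not_or.mp hK).1))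
      -- the first factor of block `K` is `x̄_j`, which moves column `j + 1` to column `j`
      refine foldl_tropMul_ne_bot_of_mem (lowerBlock_apply_self_ne_bot W K)
        (t := ⟨j + 1, by omega⟩) (List.mem_map.mpr ⟨0, List.mem_range.mpr K.succ_pos, rfl⟩)
        (ih (Fin.le_def.mpr (by simp; omega)) (Or.inr (by simp; omega)))
        (xLow_ne_bot (Or.inr ⟨by simp; omega, by omega⟩))

lemma Lmat_ne_bot (W : Matrix (Fin n) (Fin n) ℝ) {i j : Fin n} (hji : j ≤ i) :
    Lmat n W i j ≠ ⊥ :=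
  foldl_lowerBlock_ne_bot W (n - 1) hji (Or.inr (by omega))

lemma Dmat_apply_self_ne_bot (W : Matrix (Fin n) (Fin n) ℝ) (a : Fin n) : Dmat n W a a ≠ ⊥ := by
  refine foldl_tropMul_ne_bot (fun M hM => ?_) (by simp [tropId])
  simp only [List.mem_map] at hM
  obtain ⟨_, _, rfl⟩ := hM
  exact xDiag_apply_self_ne_bot _ _

end FiniteEntries

/-- the tropical transfer matrix of the canonical totally
connected planar network has real entries and is tropical totally nonnegative. -/
theorem transfer_matrix_TN (n : ℕ) (W : Matrix (Fin n) (Fin n) ℝ) :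
    (∀ i j : Fin n, ∃ r : ℝ, Tmat n W i j = (r : WithBot ℝ)) ∧
      IsTropTN n (Tmat n W) := by
  refine ⟨fun i j => ?_, isTropTN_tropMul (isTropTN_tropMul (isTropTN_Lmat W) (isTropTN_Dmat W))
    (isTropTN_Lmat Wᵀ).transpose⟩
  have hT : Tmat n W i j ≠ ⊥ :=
    tropMul_ne_bot (tropMul_ne_bot (Lmat_ne_bot W (min_le_left i j)) (Dmat_apply_self_ne_bot W _))
      (Lmat_ne_bot Wᵀ (min_le_right i j))
  obtain ⟨r, hr⟩ := WithBot.ne_bot_iff_exists.mp hT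
  exact ⟨r, hr.symm⟩
end

section
/- For every W ∈ Matrix (Fin n) (Fin n) ℝ and all indices i, j, the (i,j) entry of the tropical transfer matrix dominates the weight of the uppermost path: T(W)_{i,j} ≥ ψ(W)_{i,j} in ℝ ∪ {−∞} (coercing the real number ψ(W)_{i,j} into ℝ ∪ {−∞}). -/
open Finset

/-
`T(W)_{i,j} ≥ L(W)_{i,m} + D(W)_{m,m} + L(Wᵀ)_{j,m}` with `m = min i j`, so it suffices to bound
the entries of `L(W)` and `D(W)` from below. All elementary factors have nonnegative diagonals,
so a max-plus product of factors dominates the weight of any path that takes one off-diagonal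
step from some of the factors, in order, and stays put in the others. The uppermost path from `i`
down to `j ≤ i` in `L(W)` takes the step `t → t - 1` of weight `W_{t,j}` from the `j`-th factor
of each of the last `i - j` blocks of `L(W)`.
-/

section TropicalProduct

variable {n : ℕ}

theorem le_tropMul_apply (A B : Matrix (Fin n) (Fin n) (WithBot ℝ)) (i k j : Fin n) :
    A i k + B k j ≤ tropMul A B i j :=
  Finset.le_sup (f := fun k => A i k + B k j) (Finset.mem_univ k)

theorem le_tropMul_apply_of_diag_nonneg {M : Matrix (Fin n) (Fin n) (WithBot ℝ)} {j : Fin n}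
    (hM : 0 ≤ M j j) (P : Matrix (Fin n) (Fin n) (WithBot ℝ)) (i : Fin n) :
    P i j ≤ tropMul P M i j :=
  calc P i j = P i j + 0 := (add_zero _).symm
    _ ≤ P i j + M j j := add_le_add_right hM _
    _ ≤ tropMul P M i j := le_tropMul_apply P M i j j

theorem le_foldl_tropMul_apply {l : List (Matrix (Fin n) (Fin n) (WithBot ℝ))} {j : Fin n}
    (hl : ∀ M ∈ l, 0 ≤ M j j) (P : Matrix (Fin n) (Fin n) (WithBot ℝ)) (i : Fin n) :
    P i j ≤ l.foldl tropMul P i j := by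
  induction l generalizing P with
  | nil => rfl
  | cons M l ih =>
    exact (le_tropMul_apply_of_diag_nonneg (hl M List.mem_cons_self) P i).trans
      (ih (fun N hN => hl N (List.mem_cons_of_mem M hN)) _)

theorem add_le_foldl_tropMul_apply {a b : Fin n} :
    ∀ (l : List (Matrix (Fin n) (Fin n) (WithBot ℝ))) (p : ℕ) (hp : p < l.length),
    (∀ q (hq : q < l.length), q < p → 0 ≤ l[q] a a) →
    (∀ q (hq : q < l.length), p < q → 0 ≤ l[q] b b) →
    ∀ (P : Matrix (Fin n) (Fin n) (WithBot ℝ)) (i : Fin n),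
    P i a + l[p] a b ≤ l.foldl tropMul P i b
  | M :: l, 0, _, _, hafter, P, i =>
    (le_tropMul_apply P M i a b).trans <| le_foldl_tropMul_apply
      (fun N hN => by
        obtain ⟨q, hq, rfl⟩ := List.mem_iff_getElem.mp hN
        exact hafter (q + 1) (by simpa using hq) q.succ_pos) _ i
  | M :: l, p + 1, hp, hbefore, hafter, P, i =>
    calc P i a + (M :: l)[p + 1] a b
        ≤ tropMul P M i a + (l[p]'(Nat.lt_of_succ_lt_succ hp)) a b :=
          add_le_add_left (le_tropMul_apply_of_diag_nonneg (hbefore 0 (by simp) p.succ_pos) P i) _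
      _ ≤ l.foldl tropMul (tropMul P M) i b :=
          add_le_foldl_tropMul_apply l p (by simpa using hp)
            (fun q hq h => hbefore (q + 1) (by simpa using hq) (by omega))
            (fun q hq h => hafter (q + 1) (by simpa using hq) (by omega)) _ i

end TropicalProduct

theorem xLow_apply_self (n i : ℕ) (s : ℝ) (a : Fin n) : xLow n i s a a = 0 := by
  simp [xLow]

def Lblock (n : ℕ) (W : Matrix (Fin n) (Fin n) ℝ) (k : ℕ) :
    List (Matrix (Fin n) (Fin n) (WithBot ℝ)) :=
  (List.range (k + 1)).map fun t => xLow n (n - k + t - 2) (wnat n W (n - k + t - 1) t)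

theorem Lblock_getElem (n : ℕ) (W : Matrix (Fin n) (Fin n) ℝ) (k t : ℕ)
    (ht : t < (Lblock n W k).length) :
    (Lblock n W k)[t] = xLow n (n - k + t - 2) (wnat n W (n - k + t - 1) t) := by
  simp [Lblock]

def Lpartial (n : ℕ) (W : Matrix (Fin n) (Fin n) ℝ) (k : ℕ) :
    Matrix (Fin n) (Fin n) (WithBot ℝ) :=
  ((List.range k).flatMap (Lblock n W)).foldl tropMul (tropId n)

theorem Lpartial_succ (n : ℕ) (W : Matrix (Fin n) (Fin n) ℝ) (k : ℕ) :
    Lpartial n W (k + 1) = (Lblock n W k).foldl tropMul (Lpartial n W k) := by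
  simp [Lpartial, List.range_succ, List.flatMap_append, List.foldl_append]

theorem Lpartial_apply_self_nonneg (n : ℕ) (W : Matrix (Fin n) (Fin n) ℝ) (k : ℕ)
    (a : Fin n) : 0 ≤ Lpartial n W k a a :=
  le_foldl_tropMul_apply
    (fun M hM => by
      obtain ⟨_, -, t, -, rfl⟩ := by simpa [Lblock] using hM
      exact (xLow_apply_self ..).ge)
    (tropId n) a |>.trans' (by simp [tropId])

theorem add_le_foldl_Lblock {n : ℕ} (W : Matrix (Fin n) (Fin n) ℝ) {k : ℕ} {a b j : Fin n}
    (hab : b.val + 1 = a.val) (hjb : j ≤ b) (hk : a.val + k + 1 = n + j.val)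
    (P : Matrix (Fin n) (Fin n) (WithBot ℝ)) (i : Fin n) :
    P i a + W a j ≤ (Lblock n W k).foldl tropMul P i b := by
  have hjb : j.val ≤ b.val := hjb
  have hjk : j.val < k + 1 := by omega
  convert add_le_foldl_tropMul_apply (a := a) (b := b) (Lblock n W k) j.val
    (by simpa [Lblock] using hjk)
    (fun q _ _ => by simp [Lblock_getElem, xLow_apply_self])
    (fun q _ _ => by simp [Lblock_getElem, xLow_apply_self]) P i using 2
  have hba : a ≠ b := fun h => by omega
  rw [Lblock_getElem, xLow, if_neg hba, if_pos ⟨by omega, by omega⟩, wnat,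
    dif_pos ⟨by omega, j.isLt⟩]
  congr 2
  exact Fin.ext (by simp; omega)

theorem sum_Ioc_le_Lpartial {n : ℕ} (W : Matrix (Fin n) (Fin n) ℝ) {i j r : Fin n} (k : ℕ)
    (hjr : j ≤ r) (hri : r ≤ i) (hr : r.val + k = j.val + n - 1) :
    ((∑ t ∈ Finset.Ioc r i, W t j : ℝ) : WithBot ℝ) ≤ Lpartial n W k i r := by
  induction k generalizing r with
  | zero =>
    obtain rfl : r = i := Fin.ext (by have := i.isLt; have : r.val ≤ i.val := hri; omega)
    simpa using Lpartial_apply_self_nonneg n W 0 r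
  | succ k ih =>
    rcases eq_or_lt_of_le hri with rfl | hri
    · simpa using Lpartial_apply_self_nonneg n W (k + 1) r
    have hri' : r.val < i.val := hri
    let a : Fin n := ⟨r.val + 1, by omega⟩
    have hIoc : Finset.Ioc r i = Finset.Icc a i := by
      ext t
      simp only [Finset.mem_Ioc, Finset.mem_Icc, Fin.lt_def, Fin.le_def, a]
      omega
    have hai : a ≤ i := Fin.le_def.mpr (by simp [a]; omega)
    calc ((∑ t ∈ Finset.Ioc r i, W t j : ℝ) : WithBot ℝ)
        = (∑ t ∈ Finset.Ioc a i, W t j : ℝ) + W a j := by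
          rw [hIoc, Finset.Icc_eq_cons_Ioc hai, Finset.sum_cons, add_comm, WithBot.coe_add]
      _ ≤ Lpartial n W k i a + W a j :=
          add_le_add_left (ih (hjr.trans (Fin.le_def.mpr (by simp [a]))) hai (by simp [a]; omega)) _
      _ ≤ Lpartial n W (k + 1) i r := by
          rw [Lpartial_succ]
          exact add_le_foldl_Lblock W rfl hjr (by simp [a]; omega) _ i

theorem sum_Ioc_le_Lmat {n : ℕ} (W : Matrix (Fin n) (Fin n) ℝ) {i j : Fin n} (hji : j ≤ i) :
    ((∑ t ∈ Finset.Ioc j i, W t j : ℝ) : WithBot ℝ) ≤ Lmat n W i j :=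
  sum_Ioc_le_Lpartial W (n - 1) le_rfl hji (by omega)

theorem le_Dmat_apply_self {n : ℕ} (W : Matrix (Fin n) (Fin n) ℝ) (j : Fin n) :
    (W j j : WithBot ℝ) ≤ Dmat n W j j := by
  have h := add_le_foldl_tropMul_apply (a := j) (b := j)
    ((List.range n).map fun i => xDiag n i (wnat n W i i)) j.val (by simp)
    (fun q _ hq => by simp [xDiag, hq.ne']) (fun q _ hq => by simp [xDiag, hq.ne]) (tropId n) j
  simp only [List.getElem_map, List.getElem_range] at h
  simpa [tropId, xDiag, wnat, Dmat] using h

theorem Lmat_apply_self_nonneg {n : ℕ} (W : Matrix (Fin n) (Fin n) ℝ) (i : Fin n) :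
    0 ≤ Lmat n W i i :=
  Lpartial_apply_self_nonneg n W (n - 1) i

theorem add_add_le_Tmat_apply {n : ℕ} (W : Matrix (Fin n) (Fin n) ℝ) (i j k : Fin n) :
    Lmat n W i k + Dmat n W k k + Lmat n W.transpose j k ≤ Tmat n W i j :=
  (add_le_add_left (le_tropMul_apply _ _ i k k) _).trans
    (le_tropMul_apply _ (Lmat n W.transpose).transpose i k j)

/-- each entry of the tropical transfer matrix dominates the
weight of the corresponding uppermost path. -/
theorem transfer_ge_uppermost (n : ℕ) (W : Matrix (Fin n) (Fin n) ℝ)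
    (i j : Fin n) :
    ((psi n W i j : ℝ) : WithBot ℝ) ≤ Tmat n W i j := by
  rcases le_or_gt i j with hij | hji
  · calc ((psi n W i j : ℝ) : WithBot ℝ)
        = 0 + W i i + ((∑ t ∈ Finset.Ioc i j, W.transpose t i : ℝ) : WithBot ℝ) := by
          rw [psi, if_pos hij, Finset.Icc_eq_cons_Ioc hij, Finset.sum_cons]
          simp
      _ ≤ Lmat n W i i + Dmat n W i i + Lmat n W.transpose j i :=
          add_le_add (add_le_add (Lmat_apply_self_nonneg W i) (le_Dmat_apply_self W i))
            (sum_Ioc_le_Lmat W.transpose hij)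
      _ ≤ Tmat n W i j := add_add_le_Tmat_apply W i j i
  · calc ((psi n W i j : ℝ) : WithBot ℝ)
        = ((∑ t ∈ Finset.Ioc j i, W t j : ℝ) : WithBot ℝ) + W j j + 0 := by
          rw [psi, if_neg (not_le.mpr hji), Finset.Icc_eq_cons_Ioc hji.le, Finset.sum_cons]
          simp [add_comm]
      _ ≤ Lmat n W i j + Dmat n W j j + Lmat n W.transpose j j :=
          add_le_add (add_le_add (sum_Ioc_le_Lmat W hji.le) (le_Dmat_apply_self W j))
            (Lmat_apply_self_nonneg W.transpose j)
      _ ≤ Tmat n W i j := add_add_le_Tmat_apply W i j j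
end
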